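/- Let ω_{kl}(x,t) be an invertible skew-symmetric tensor field satisfying the Jacobi identity and the invariance equation ∂_t ω_{kl} = ∂_k(ω_{lm} X^m) - ∂_l(ω_{km} X^m). If A and B are smooth functions on ℝ^{2n} × ℝ that are constants of motion, i.e., ∂_t A + X^m ∂_m A = 0 and ∂_t B + X^m ∂_m B = 0, then the bracket {A,B} = ω^{kl} ∂_k A ∂_l B is also a constant of motion: ∂_t{A,B} + X^m ∂_m{A,B} = 0. -/

import Mathlib

/-- Partial derivative of `f` in the `k`-th coordinate direction. -/
noncomputable def pd {N : ℕ} (k : Fin N) (f : (Fin N → ℝ) → ℝ) (x : Fin N → ℝ) : ℝ :=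
  fderiv ℝ f x (Pi.single k 1)

namespace PB
variable {N : ℕ}

lemma slice_x {F : (Fin N → ℝ) × ℝ → ℝ} (hF : ContDiff ℝ (⊤ : ℕ∞) F) (t : ℝ) :
    ContDiff ℝ (⊤ : ℕ∞) (fun y : Fin N → ℝ => F (y, t)) :=
  hF.comp (contDiff_id.prodMk contDiff_const)

lemma slice_t {F : (Fin N → ℝ) × ℝ → ℝ} (hF : ContDiff ℝ (⊤ : ℕ∞) F) (x : Fin N → ℝ) :
    ContDiff ℝ (⊤ : ℕ∞) (fun s : ℝ => F (x, s)) :=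
  hF.comp (contDiff_const.prodMk contDiff_id)

lemma pd_rep {F : (Fin N → ℝ) × ℝ → ℝ} (hF : ContDiff ℝ (⊤ : ℕ∞) F) (k : Fin N)
    (x : Fin N → ℝ) (t : ℝ) :
    pd k (fun y => F (y, t)) x = fderiv ℝ F (x, t) (Pi.single k 1, 0) := by
  have h1 : HasFDerivAt (fun y : Fin N → ℝ => (y, t))
      ((ContinuousLinearMap.id ℝ (Fin N → ℝ)).prod 0) x :=
    (hasFDerivAt_id x).prodMk (hasFDerivAt_const t x)
  have h2 := (hF.differentiable (by simp) (x, t)).hasFDerivAt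
  have h3 : HasFDerivAt (fun y => F (y, t))
      ((fderiv ℝ F (x, t)).comp ((ContinuousLinearMap.id ℝ (Fin N → ℝ)).prod 0)) x :=
    h2.comp x h1
  rw [pd, h3.fderiv]
  rfl

lemma dt_rep {F : (Fin N → ℝ) × ℝ → ℝ} (hF : ContDiff ℝ (⊤ : ℕ∞) F)
    (x : Fin N → ℝ) (t : ℝ) :
    deriv (fun s => F (x, s)) t = fderiv ℝ F (x, t) (0, 1) := by
  have h1 : HasDerivAt (fun s : ℝ => ((x : Fin N → ℝ), s)) (0, 1) t :=
    (hasDerivAt_const t x).prodMk (hasDerivAt_id t)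
  have h2 := (hF.differentiable (by simp) (x, t)).hasFDerivAt
  have h3 : HasDerivAt (fun s => F (x, s)) (fderiv ℝ F (x, t) (0, 1)) t :=
    h2.comp_hasDerivAt t h1
  exact h3.deriv

lemma contDiff_fderiv_apply {F : (Fin N → ℝ) × ℝ → ℝ} (hF : ContDiff ℝ (⊤ : ℕ∞) F)
    (v : (Fin N → ℝ) × ℝ) :
    ContDiff ℝ (⊤ : ℕ∞) (fun p => fderiv ℝ F p v) :=
  (hF.fderiv_right (by simp)).clm_apply contDiff_const

lemma fderiv_swap {F : (Fin N → ℝ) × ℝ → ℝ} (hF : ContDiff ℝ (⊤ : ℕ∞) F)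
    (p v w : (Fin N → ℝ) × ℝ) :
    fderiv ℝ (fun q => fderiv ℝ F q v) p w = fderiv ℝ (fun q => fderiv ℝ F q w) p v := by
  have hsym := (hF.contDiffAt (x := p)).isSymmSndFDerivAt (by
    rw [minSmoothness_of_isRCLikeNormedField]; exact WithTop.coe_le_coe.mpr le_top)
  have hd : DifferentiableAt ℝ (fderiv ℝ F) p :=
    ((hF.fderiv_right (m := 1) (WithTop.coe_le_coe.mpr le_top)).differentiable (by norm_num)) p
  rw [fderiv_clm_apply hd (differentiableAt_const v),
      fderiv_clm_apply hd (differentiableAt_const w)]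
  simp [hsym w v]

lemma contDiff_pd {F : (Fin N → ℝ) × ℝ → ℝ} (hF : ContDiff ℝ (⊤ : ℕ∞) F) (k : Fin N) :
    ContDiff ℝ (⊤ : ℕ∞) (fun p : (Fin N → ℝ) × ℝ => pd k (fun y => F (y, p.2)) p.1) := by
  have h : (fun p : (Fin N → ℝ) × ℝ => pd k (fun y => F (y, p.2)) p.1)
      = fun p => fderiv ℝ F p (Pi.single k 1, 0) := by
    funext p; exact pd_rep hF k p.1 p.2
  rw [h]; exact contDiff_fderiv_apply hF _

lemma pd_pd_swap {F : (Fin N → ℝ) × ℝ → ℝ} (hF : ContDiff ℝ (⊤ : ℕ∞) F) (k m : Fin N)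
    (x : Fin N → ℝ) (t : ℝ) :
    pd m (fun y => pd k (fun z => F (z, t)) y) x
      = pd k (fun y => pd m (fun z => F (z, t)) y) x := by
  have h1 : (fun y => pd k (fun z => F (z, t)) y)
      = fun y => fderiv ℝ F (y, t) (Pi.single k 1, 0) := by
    funext y; exact pd_rep hF k y t
  have h2 : (fun y => pd m (fun z => F (z, t)) y)
      = fun y => fderiv ℝ F (y, t) (Pi.single m 1, 0) := by
    funext y; exact pd_rep hF m y t
  rw [h1, h2,
    pd_rep (F := fun p => fderiv ℝ F p (Pi.single k 1, 0)) (contDiff_fderiv_apply hF _) m x t,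
    pd_rep (F := fun p => fderiv ℝ F p (Pi.single m 1, 0)) (contDiff_fderiv_apply hF _) k x t,
    fderiv_swap hF]

lemma dt_pd_swap {F : (Fin N → ℝ) × ℝ → ℝ} (hF : ContDiff ℝ (⊤ : ℕ∞) F) (k : Fin N)
    (x : Fin N → ℝ) (t : ℝ) :
    deriv (fun s => pd k (fun y => F (y, s)) x) t
      = pd k (fun y => deriv (fun s => F (y, s)) t) x := by
  have h1 : (fun s => pd k (fun y => F (y, s)) x)
      = fun s => fderiv ℝ F (x, s) (Pi.single k 1, 0) := by
    funext s; exact pd_rep hF k x s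
  have h2 : (fun y => deriv (fun s => F (y, s)) t)
      = fun y => fderiv ℝ F (y, t) (0, 1) := by
    funext y; exact dt_rep hF y t
  rw [h1, h2,
    dt_rep (F := fun p => fderiv ℝ F p (Pi.single k 1, 0)) (contDiff_fderiv_apply hF _) x t,
    pd_rep (F := fun p => fderiv ℝ F p (0, 1)) (contDiff_fderiv_apply hF _) k x t,
    fderiv_swap hF]

lemma pd_mul {f g : (Fin N → ℝ) → ℝ} {x : Fin N → ℝ} (hf : DifferentiableAt ℝ f x)
    (hg : DifferentiableAt ℝ g x) (k : Fin N) :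
    pd k (fun y => f y * g y) x = pd k f x * g x + f x * pd k g x := by
  unfold pd
  rw [fderiv_fun_mul hf hg]
  simp only [ContinuousLinearMap.add_apply, ContinuousLinearMap.smul_apply, smul_eq_mul]
  ring

lemma pd_sum {ι : Type*} (s : Finset ι) {f : ι → (Fin N → ℝ) → ℝ} {x : Fin N → ℝ}
    (hf : ∀ i ∈ s, DifferentiableAt ℝ (f i) x) (k : Fin N) :
    pd k (fun y => ∑ i ∈ s, f i y) x = ∑ i ∈ s, pd k (f i) x := by
  unfold pd
  rw [fderiv_fun_sum hf]
  simp

lemma pd_neg {f : (Fin N → ℝ) → ℝ} {x : Fin N → ℝ} (k : Fin N) :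
    pd k (fun y => -f y) x = -pd k f x := by
  unfold pd
  rw [fderiv_fun_neg]
  simp

lemma pd_congr {f g : (Fin N → ℝ) → ℝ} (h : ∀ y, f y = g y) (k : Fin N) (x : Fin N → ℝ) :
    pd k f x = pd k g x := by
  have : f = g := funext h
  rw [this]

variable (X : (Fin N → ℝ) → Fin N → ℝ)

noncomputable def Dop (f : (Fin N → ℝ) → ℝ → ℝ) (x : Fin N → ℝ) (t : ℝ) : ℝ :=
  deriv (fun s => f x s) t + ∑ m, X x m * pd m (fun y => f y t) x

variable {X}

lemma Dop_congr {f g : (Fin N → ℝ) → ℝ → ℝ} (h : ∀ x t, f x t = g x t)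
    (x : Fin N → ℝ) (t : ℝ) : Dop X f x t = Dop X g x t := by
  have : f = g := funext fun a => funext (h a)
  rw [this]

lemma Dop_const (c : ℝ) (x : Fin N → ℝ) (t : ℝ) : Dop X (fun _ _ => c) x t = 0 := by
  unfold Dop pd
  simp

lemma Dop_mul {f g : (Fin N → ℝ) → ℝ → ℝ}
    (hf : ContDiff ℝ (⊤ : ℕ∞) (fun p : (Fin N → ℝ) × ℝ => f p.1 p.2))
    (hg : ContDiff ℝ (⊤ : ℕ∞) (fun p : (Fin N → ℝ) × ℝ => g p.1 p.2))
    (x : Fin N → ℝ) (t : ℝ) :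
    Dop X (fun x t => f x t * g x t) x t = Dop X f x t * g x t + f x t * Dop X g x t := by
  have hft : DifferentiableAt ℝ (fun s => f x s) t :=
    ((slice_t hf x).differentiable (by simp)) t
  have hgt : DifferentiableAt ℝ (fun s => g x s) t :=
    ((slice_t hg x).differentiable (by simp)) t
  have hfx : DifferentiableAt ℝ (fun y => f y t) x :=
    ((slice_x hf t).differentiable (by simp)) x
  have hgx : DifferentiableAt ℝ (fun y => g y t) x :=
    ((slice_x hg t).differentiable (by simp)) x
  unfold Dop
  rw [deriv_fun_mul hft hgt]
  have hsum : ∀ m : Fin N, X x m * pd m (fun y => f y t * g y t) x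
      = X x m * pd m (fun y => f y t) x * g x t + f x t * (X x m * pd m (fun y => g y t) x) := by
    intro m
    rw [pd_mul hfx hgx]
    ring
  rw [Finset.sum_congr rfl fun m _ => hsum m, Finset.sum_add_distrib, ← Finset.sum_mul,
    ← Finset.mul_sum]
  ring

lemma Dop_sum {ι : Type*} (s : Finset ι) {f : ι → (Fin N → ℝ) → ℝ → ℝ}
    (hf : ∀ i ∈ s, ContDiff ℝ (⊤ : ℕ∞) (fun p : (Fin N → ℝ) × ℝ => f i p.1 p.2))
    (x : Fin N → ℝ) (t : ℝ) :
    Dop X (fun x t => ∑ i ∈ s, f i x t) x t = ∑ i ∈ s, Dop X (f i) x t := by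
  unfold Dop
  beta_reduce
  rw [deriv_fun_sum (fun i hi => ((slice_t (hf i hi) x).differentiable (by simp)) t)]
  have hpd : ∀ m : Fin N, pd m (fun y => ∑ i ∈ s, f i y t) x
      = ∑ i ∈ s, pd m (fun y => f i y t) x := fun m =>
    pd_sum s (fun i hi => ((slice_x (hf i hi) t).differentiable (by simp)) x) m
  simp_rw [hpd, Finset.mul_sum]
  rw [Finset.sum_comm, ← Finset.sum_add_distrib]

lemma sum_swap13 (f : Fin N → Fin N → Fin N → ℝ) :
    ∑ k, ∑ l, ∑ m, f k l m = ∑ k, ∑ l, ∑ m, f m l k :=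
  calc ∑ k, ∑ l, ∑ m, f k l m
      = ∑ k, ∑ m, ∑ l, f k l m := Finset.sum_congr rfl (fun _ _ => Finset.sum_comm)
    _ = ∑ m, ∑ k, ∑ l, f k l m := Finset.sum_comm
    _ = ∑ m, ∑ l, ∑ k, f k l m := Finset.sum_congr rfl (fun _ _ => Finset.sum_comm)

lemma sum_swap23 (f : Fin N → Fin N → Fin N → ℝ) :
    ∑ k, ∑ l, ∑ m, f k l m = ∑ k, ∑ l, ∑ m, f k m l :=
  Finset.sum_congr rfl (fun _ _ => Finset.sum_comm)

lemma expand_helper {N : ℕ} (S1 S2 S3 S4 : Fin N → ℝ) (w P Q : ℝ) :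
    (∑ m, S1 m + ∑ m, S2 m) * P * Q + w * (-∑ m, S3 m) * Q + w * P * (-∑ m, S4 m)
      = ∑ m, (S1 m * P * Q + S2 m * P * Q - w * S3 m * Q - w * P * S4 m) := by
  have h1 : (∑ m, S1 m + ∑ m, S2 m) * P * Q
      = (∑ m, S1 m * P * Q) + ∑ m, S2 m * P * Q := by
    rw [add_mul, add_mul, Finset.sum_mul, Finset.sum_mul, Finset.sum_mul, Finset.sum_mul]
  have h2 : w * (-∑ m, S3 m) * Q = -∑ m, w * S3 m * Q := by
    rw [mul_neg, neg_mul, Finset.mul_sum, Finset.sum_mul]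
  have h3 : w * P * (-∑ m, S4 m) = -∑ m, w * P * S4 m := by
    rw [mul_neg, Finset.mul_sum]
  rw [h1, h2, h3, ← sub_eq_add_neg, ← sub_eq_add_neg, ← Finset.sum_add_distrib,
    ← Finset.sum_sub_distrib, ← Finset.sum_sub_distrib]

end PB

open PB

/-- for an invertible skew-symmetric metric satisfying the Jacobi identity
and the invariance equation, the bracket of two constants of motion is a constant of
motion. -/
theorem bracket_of_constants_of_motion (n : ℕ)
    (X : (Fin (2 * n) → ℝ) → Fin (2 * n) → ℝ)
    (hX : ∀ m, ContDiff ℝ (⊤ : ℕ∞) (fun y => X y m))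
    (ω ωi : Fin (2 * n) → Fin (2 * n) → (Fin (2 * n) → ℝ) → ℝ → ℝ)
    (hω : ∀ k l, ContDiff ℝ (⊤ : ℕ∞) (fun p : (Fin (2 * n) → ℝ) × ℝ => ω k l p.1 p.2))
    (hωi : ∀ k l, ContDiff ℝ (⊤ : ℕ∞) (fun p : (Fin (2 * n) → ℝ) × ℝ => ωi k l p.1 p.2))
    (hskew : ∀ k l x t, ω k l x t = - ω l k x t)
    (hinv : ∀ k m x t, (∑ l, ωi k l x t * ω l m x t) = if k = m then (1 : ℝ) else 0)
    (hJac : ∀ k l m x t,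
      pd k (fun y => ω l m y t) x + pd l (fun y => ω m k y t) x
        + pd m (fun y => ω k l y t) x = 0)
    (hevol : ∀ k l x t,
      deriv (fun s => ω k l x s) t
        = pd k (fun y => ∑ m, ω l m y t * X y m) x
          - pd l (fun y => ∑ m, ω k m y t * X y m) x)
    (A B : (Fin (2 * n) → ℝ) → ℝ → ℝ)
    (hA : ContDiff ℝ (⊤ : ℕ∞) (fun p : (Fin (2 * n) → ℝ) × ℝ => A p.1 p.2))
    (hB : ContDiff ℝ (⊤ : ℕ∞) (fun p : (Fin (2 * n) → ℝ) × ℝ => B p.1 p.2))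
    (hAconst : ∀ x t, deriv (fun s => A x s) t
      + (∑ m, X x m * pd m (fun y => A y t) x) = 0)
    (hBconst : ∀ x t, deriv (fun s => B x s) t
      + (∑ m, X x m * pd m (fun y => B y t) x) = 0) :
    ∀ x t,
      deriv (fun s => ∑ k, ∑ l,
          ωi k l x s * pd k (fun z => A z s) x * pd l (fun z => B z s) x) t
        + (∑ m, X x m * pd m (fun y => ∑ k, ∑ l,
            ωi k l y t * pd k (fun z => A z t) y * pd l (fun z => B z t) y) x) = 0 := by
  classical
  -- basic differentiability facts
  have dX : ∀ m (x : Fin (2*n) → ℝ), DifferentiableAt ℝ (fun y => X y m) x :=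
    fun m x => ((hX m).differentiable (by simp)) x
  have hpA : ∀ k, ContDiff ℝ (⊤ : ℕ∞)
      (fun p : (Fin (2*n) → ℝ) × ℝ => pd k (fun z => A z p.2) p.1) :=
    fun k => contDiff_pd hA k
  have hpB : ∀ k, ContDiff ℝ (⊤ : ℕ∞)
      (fun p : (Fin (2*n) → ℝ) × ℝ => pd k (fun z => B z p.2) p.1) :=
    fun k => contDiff_pd hB k
  have dpA : ∀ k (t : ℝ) (x : Fin (2*n) → ℝ),
      DifferentiableAt ℝ (fun y => pd k (fun z => A z t) y) x :=
    fun k t x => ((slice_x (hpA k) t).differentiable (by simp)) x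
  have dpB : ∀ k (t : ℝ) (x : Fin (2*n) → ℝ),
      DifferentiableAt ℝ (fun y => pd k (fun z => B z t) y) x :=
    fun k t x => ((slice_x (hpB k) t).differentiable (by simp)) x
  have dω : ∀ k l (t : ℝ) (x : Fin (2*n) → ℝ),
      DifferentiableAt ℝ (fun y => ω k l y t) x :=
    fun k l t x => ((slice_x (hω k l) t).differentiable (by simp)) x
  -- D applied to ∂A
  have hDA : ∀ k (x : Fin (2*n) → ℝ) (t : ℝ),
      Dop X (fun x t => pd k (fun z => A z t) x) x t
        = -∑ m, pd k (fun y => X y m) x * pd m (fun z => A z t) x := by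
    intro k x t
    unfold Dop
    beta_reduce
    have e1 : deriv (fun s => pd k (fun z => A z s) x) t
        = pd k (fun y => deriv (fun s => A y s) t) x := dt_pd_swap hA k x t
    have e2 : pd k (fun y => deriv (fun s => A y s) t) x
        = pd k (fun y => -∑ m, X y m * pd m (fun z => A z t) y) x := by
      refine pd_congr (fun y => ?_) k x
      have := hAconst y t; linarith
    have e3 : pd k (fun y => -∑ m, X y m * pd m (fun z => A z t) y) x
        = -∑ m, (pd k (fun y => X y m) x * pd m (fun z => A z t) x
            + X x m * pd k (fun y => pd m (fun z => A z t) y) x) := by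
      rw [pd_neg]
      congr 1
      rw [pd_sum Finset.univ (fun m _ => (dX m x).fun_mul (dpA m t x))]
      exact Finset.sum_congr rfl fun m _ => pd_mul (dX m x) (dpA m t x) k
    have e4 : ∀ m : Fin (2*n), pd k (fun y => pd m (fun z => A z t) y) x
        = pd m (fun y => pd k (fun z => A z t) y) x := fun m => pd_pd_swap hA m k x t
    rw [e1, e2, e3]
    simp_rw [e4]
    rw [Finset.sum_add_distrib]
    ring
  have hDB : ∀ k (x : Fin (2*n) → ℝ) (t : ℝ),
      Dop X (fun x t => pd k (fun z => B z t) x) x t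
        = -∑ m, pd k (fun y => X y m) x * pd m (fun z => B z t) x := by
    intro k x t
    unfold Dop
    beta_reduce
    have e1 : deriv (fun s => pd k (fun z => B z s) x) t
        = pd k (fun y => deriv (fun s => B y s) t) x := dt_pd_swap hB k x t
    have e2 : pd k (fun y => deriv (fun s => B y s) t) x
        = pd k (fun y => -∑ m, X y m * pd m (fun z => B z t) y) x := by
      refine pd_congr (fun y => ?_) k x
      have := hBconst y t; linarith
    have e3 : pd k (fun y => -∑ m, X y m * pd m (fun z => B z t) y) x
        = -∑ m, (pd k (fun y => X y m) x * pd m (fun z => B z t) x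
            + X x m * pd k (fun y => pd m (fun z => B z t) y) x) := by
      rw [pd_neg]
      congr 1
      rw [pd_sum Finset.univ (fun m _ => (dX m x).fun_mul (dpB m t x))]
      exact Finset.sum_congr rfl fun m _ => pd_mul (dX m x) (dpB m t x) k
    have e4 : ∀ m : Fin (2*n), pd k (fun y => pd m (fun z => B z t) y) x
        = pd m (fun y => pd k (fun z => B z t) y) x := fun m => pd_pd_swap hB m k x t
    rw [e1, e2, e3]
    simp_rw [e4]
    rw [Finset.sum_add_distrib]
    ring
  -- D applied to ω
  have hDω : ∀ k l (x : Fin (2*n) → ℝ) (t : ℝ),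
      Dop X (fun x t => ω k l x t) x t
        = -∑ m, (ω m l x t * pd k (fun y => X y m) x
            + ω k m x t * pd l (fun y => X y m) x) := by
    intro k l x t
    unfold Dop
    beta_reduce
    rw [hevol k l x t]
    have e1 : pd k (fun y => ∑ m, ω l m y t * X y m) x
        = ∑ m, (pd k (fun y => ω l m y t) x * X x m
            + ω l m x t * pd k (fun y => X y m) x) := by
      rw [pd_sum Finset.univ (fun m _ => (dω l m t x).fun_mul (dX m x))]
      exact Finset.sum_congr rfl fun m _ => pd_mul (dω l m t x) (dX m x) k
    have e2 : pd l (fun y => ∑ m, ω k m y t * X y m) x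
        = ∑ m, (pd l (fun y => ω k m y t) x * X x m
            + ω k m x t * pd l (fun y => X y m) x) := by
      rw [pd_sum Finset.univ (fun m _ => (dω k m t x).fun_mul (dX m x))]
      exact Finset.sum_congr rfl fun m _ => pd_mul (dω k m t x) (dX m x) l
    rw [e1, e2]
    have e3 : ∀ m : Fin (2*n), pd k (fun y => ω l m y t) x - pd l (fun y => ω k m y t) x
        = - pd m (fun y => ω k l y t) x := by
      intro m
      have hj := hJac k l m x t
      have hs : pd l (fun y => ω k m y t) x = - pd l (fun y => ω m k y t) x := by
        have h4 : pd l (fun y => ω k m y t) x = pd l (fun y => -ω m k y t) x :=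
          pd_congr (fun y => by rw [hskew k m y t]) l x
        rw [h4, pd_neg]
      linarith
    have e4 : ∀ m : Fin (2*n), ω l m x t = -ω m l x t := fun m => hskew l m x t
    rw [← Finset.sum_sub_distrib, ← Finset.sum_add_distrib, ← Finset.sum_neg_distrib]
    refine Finset.sum_congr rfl fun m _ => ?_
    linear_combination X x m * e3 m + pd k (fun y => X y m) x * e4 m
  -- right inverse
  have hrinv : ∀ (x : Fin (2*n) → ℝ) (t : ℝ) k m,
      ∑ l, ω k l x t * ωi l m x t = if k = m then (1:ℝ) else 0 := by
    intro x t
    have h1 : (Matrix.of fun a b => ωi a b x t) * (Matrix.of fun a b => ω a b x t) = 1 := by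
      ext a b
      simp [Matrix.mul_apply, Matrix.one_apply, hinv a b x t]
    have h2 := mul_eq_one_comm.mp h1
    intro k m
    have h3 := congrFun (congrFun h2 k) m
    simpa [Matrix.mul_apply, Matrix.one_apply] using h3
  -- D applied to ωi
  have hDωi : ∀ k a (x : Fin (2*n) → ℝ) (t : ℝ),
      Dop X (fun x t => ωi k a x t) x t
        = ∑ m, pd m (fun y => X y k) x * ωi m a x t
          + ∑ l, ωi k l x t * pd l (fun y => X y a) x := by
    intro k a x t
    have hA0 : ∀ m, (∑ l, Dop X (fun x t => ωi k l x t) x t * ω l m x t)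
        + (∑ l, ωi k l x t * Dop X (fun x t => ω l m x t) x t) = 0 := by
      intro m
      have h1 : Dop X (fun x t => ∑ l, ωi k l x t * ω l m x t) x t
          = ∑ l, (Dop X (fun x t => ωi k l x t) x t * ω l m x t
              + ωi k l x t * Dop X (fun x t => ω l m x t) x t) := by
        rw [Dop_sum Finset.univ (fun l _ => ((hωi k l).mul (hω l m))) x t]
        exact Finset.sum_congr rfl fun l _ => Dop_mul (hωi k l) (hω l m) x t
      have h2 : Dop X (fun x t => ∑ l, ωi k l x t * ω l m x t) x t = 0 := by
        rw [Dop_congr (fun x t => hinv k m x t) x t, Dop_const]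
      rw [← Finset.sum_add_distrib, ← h1, h2]
    have key : Dop X (fun x t => ωi k a x t) x t
        = ∑ m, (∑ l, Dop X (fun x t => ωi k l x t) x t * ω l m x t) * ωi m a x t := by
      symm
      calc ∑ m, (∑ l, Dop X (fun x t => ωi k l x t) x t * ω l m x t) * ωi m a x t
          = ∑ m, ∑ l, Dop X (fun x t => ωi k l x t) x t * (ω l m x t * ωi m a x t) := by
            refine Finset.sum_congr rfl fun m _ => ?_
            rw [Finset.sum_mul]
            exact Finset.sum_congr rfl fun l _ => by ring
        _ = ∑ l, ∑ m, Dop X (fun x t => ωi k l x t) x t * (ω l m x t * ωi m a x t) :=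
            Finset.sum_comm
        _ = ∑ l, Dop X (fun x t => ωi k l x t) x t * ∑ m, ω l m x t * ωi m a x t :=
            Finset.sum_congr rfl fun l _ => (Finset.mul_sum _ _ _).symm
        _ = ∑ l, Dop X (fun x t => ωi k l x t) x t * (if l = a then 1 else 0) :=
            Finset.sum_congr rfl fun l _ => by rw [hrinv x t l a]
        _ = Dop X (fun x t => ωi k a x t) x t := by simp
    have hA1 : ∀ m, ∑ l, Dop X (fun x t => ωi k l x t) x t * ω l m x t
        = -∑ l, ωi k l x t * Dop X (fun x t => ω l m x t) x t := by
      intro m; have := hA0 m; linarith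
    rw [key]
    have step1 : ∑ m, (∑ l, Dop X (fun x t => ωi k l x t) x t * ω l m x t) * ωi m a x t
        = ∑ m, ∑ l, ∑ b, (ωi k l x t * (ω b m x t * pd l (fun y => X y b) x) * ωi m a x t
            + (ωi k l x t * ω l b x t) * (pd m (fun y => X y b) x * ωi m a x t)) := by
      refine Finset.sum_congr rfl fun m _ => ?_
      rw [hA1 m, neg_mul, Finset.sum_mul, ← Finset.sum_neg_distrib]
      refine Finset.sum_congr rfl fun l _ => ?_
      rw [hDω l m x t, mul_neg, neg_mul, neg_neg, Finset.mul_sum, Finset.sum_mul]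
      exact Finset.sum_congr rfl fun b _ => by ring
    rw [step1]
    simp only [Finset.sum_add_distrib]
    have hP1 : ∑ m, ∑ l, ∑ b,
        ωi k l x t * (ω b m x t * pd l (fun y => X y b) x) * ωi m a x t
        = ∑ l, ωi k l x t * pd l (fun y => X y a) x := by
      have h5 : ∑ m, ∑ l, ∑ b,
          ωi k l x t * (ω b m x t * pd l (fun y => X y b) x) * ωi m a x t
          = ∑ l, ∑ b, (ωi k l x t * pd l (fun y => X y b) x)
              * ∑ m, ω b m x t * ωi m a x t := by
        rw [Finset.sum_comm]
        refine Finset.sum_congr rfl fun l _ => ?_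
        rw [Finset.sum_comm]
        refine Finset.sum_congr rfl fun b _ => ?_
        rw [Finset.mul_sum]
        exact Finset.sum_congr rfl fun m _ => by ring
      rw [h5]
      simp_rw [hrinv x t]
      simp [mul_ite]
    have hP2 : ∑ m, ∑ l, ∑ b,
        (ωi k l x t * ω l b x t) * (pd m (fun y => X y b) x * ωi m a x t)
        = ∑ m, pd m (fun y => X y k) x * ωi m a x t := by
      refine Finset.sum_congr rfl fun m _ => ?_
      have h6 : ∑ l, ∑ b, (ωi k l x t * ω l b x t) * (pd m (fun y => X y b) x * ωi m a x t)
          = ∑ b, (∑ l, ωi k l x t * ω l b x t) * (pd m (fun y => X y b) x * ωi m a x t) := by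
        rw [Finset.sum_comm]
        exact Finset.sum_congr rfl fun b _ => (Finset.sum_mul _ _ _).symm
      rw [h6]
      simp_rw [hinv]
      simp [ite_mul]
    rw [hP1, hP2, add_comm]
  -- final assembly
  intro x t
  show Dop X (fun x t => ∑ k, ∑ l,
      ωi k l x t * pd k (fun z => A z t) x * pd l (fun z => B z t) x) x t = 0
  have hsm : ∀ k l : Fin (2*n), ContDiff ℝ (⊤ : ℕ∞) (fun p : (Fin (2*n) → ℝ) × ℝ =>
      ωi k l p.1 p.2 * pd k (fun z => A z p.2) p.1 * pd l (fun z => B z p.2) p.1) :=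
    fun k l => ((hωi k l).mul (hpA k)).mul (hpB l)
  have e1 : Dop X (fun x t => ∑ k, ∑ l,
      ωi k l x t * pd k (fun z => A z t) x * pd l (fun z => B z t) x) x t
      = ∑ k, Dop X (fun x t => ∑ l,
          ωi k l x t * pd k (fun z => A z t) x * pd l (fun z => B z t) x) x t :=
    Dop_sum Finset.univ (fun k _ => ContDiff.sum fun l _ => hsm k l) x t
  have e2 : ∀ k, Dop X (fun x t => ∑ l,
      ωi k l x t * pd k (fun z => A z t) x * pd l (fun z => B z t) x) x t
      = ∑ l, Dop X (fun x t =>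
          ωi k l x t * pd k (fun z => A z t) x * pd l (fun z => B z t) x) x t :=
    fun k => Dop_sum Finset.univ (fun l _ => hsm k l) x t
  have e3 : ∀ k l, Dop X (fun x t =>
      ωi k l x t * pd k (fun z => A z t) x * pd l (fun z => B z t) x) x t
      = Dop X (fun x t => ωi k l x t) x t * pd k (fun z => A z t) x * pd l (fun z => B z t) x
        + ωi k l x t * Dop X (fun x t => pd k (fun z => A z t) x) x t
            * pd l (fun z => B z t) x
        + ωi k l x t * pd k (fun z => A z t) x
            * Dop X (fun x t => pd l (fun z => B z t) x) x t := by
    intro k l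
    have h1 : Dop X (fun x t =>
        ωi k l x t * pd k (fun z => A z t) x * pd l (fun z => B z t) x) x t
        = Dop X (fun x t => ωi k l x t * pd k (fun z => A z t) x) x t
            * pd l (fun z => B z t) x
          + (ωi k l x t * pd k (fun z => A z t) x)
            * Dop X (fun x t => pd l (fun z => B z t) x) x t :=
      Dop_mul ((hωi k l).mul (hpA k)) (hpB l) x t
    have h2 : Dop X (fun x t => ωi k l x t * pd k (fun z => A z t) x) x t
        = Dop X (fun x t => ωi k l x t) x t * pd k (fun z => A z t) x
          + ωi k l x t * Dop X (fun x t => pd k (fun z => A z t) x) x t :=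
      Dop_mul (hωi k l) (hpA k) x t
    rw [h1, h2]; ring
  rw [e1]
  have e4 : ∀ k l : Fin (2*n), Dop X (fun x t =>
      ωi k l x t * pd k (fun z => A z t) x * pd l (fun z => B z t) x) x t
      = ∑ m, (pd m (fun y => X y k) x * ωi m l x t
            * pd k (fun z => A z t) x * pd l (fun z => B z t) x
          + ωi k m x t * pd m (fun y => X y l) x
            * pd k (fun z => A z t) x * pd l (fun z => B z t) x
          - ωi k l x t * (pd k (fun y => X y m) x * pd m (fun z => A z t) x)
            * pd l (fun z => B z t) x
          - ωi k l x t * pd k (fun z => A z t) x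
            * (pd l (fun y => X y m) x * pd m (fun z => B z t) x)) := by
    intro k l
    rw [e3 k l, hDωi k l x t, hDA k x t, hDB l x t]
    exact expand_helper _ _ _ _ _ _ _
  calc ∑ k, Dop X (fun x t => ∑ l,
        ωi k l x t * pd k (fun z => A z t) x * pd l (fun z => B z t) x) x t
      = ∑ k, ∑ l, ∑ m, (pd m (fun y => X y k) x * ωi m l x t
            * pd k (fun z => A z t) x * pd l (fun z => B z t) x
          + ωi k m x t * pd m (fun y => X y l) x
            * pd k (fun z => A z t) x * pd l (fun z => B z t) x
          - ωi k l x t * (pd k (fun y => X y m) x * pd m (fun z => A z t) x)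
            * pd l (fun z => B z t) x
          - ωi k l x t * pd k (fun z => A z t) x
            * (pd l (fun y => X y m) x * pd m (fun z => B z t) x)) := by
        refine Finset.sum_congr rfl fun k _ => ?_
        rw [e2 k]
        exact Finset.sum_congr rfl fun l _ => e4 k l
    _ = (∑ k, ∑ l, ∑ m, pd m (fun y => X y k) x * ωi m l x t
            * pd k (fun z => A z t) x * pd l (fun z => B z t) x)
        + (∑ k, ∑ l, ∑ m, ωi k m x t * pd m (fun y => X y l) x
            * pd k (fun z => A z t) x * pd l (fun z => B z t) x)
        - (∑ k, ∑ l, ∑ m, ωi k l x t * (pd k (fun y => X y m) x * pd m (fun z => A z t) x)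
            * pd l (fun z => B z t) x)
        - (∑ k, ∑ l, ∑ m, ωi k l x t * pd k (fun z => A z t) x
            * (pd l (fun y => X y m) x * pd m (fun z => B z t) x)) := by
        simp only [Finset.sum_add_distrib, Finset.sum_sub_distrib]
    _ = 0 := by
        have c3 : (∑ k, ∑ l, ∑ m, ωi k l x t
              * (pd k (fun y => X y m) x * pd m (fun z => A z t) x)
              * pd l (fun z => B z t) x)
            = ∑ k, ∑ l, ∑ m, pd m (fun y => X y k) x * ωi m l x t
              * pd k (fun z => A z t) x * pd l (fun z => B z t) x := by
          rw [sum_swap13 (fun k l m => ωi k l x t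
            * (pd k (fun y => X y m) x * pd m (fun z => A z t) x)
            * pd l (fun z => B z t) x)]
          exact Finset.sum_congr rfl fun k _ => Finset.sum_congr rfl fun l _ =>
            Finset.sum_congr rfl fun m _ => by ring
        have c4 : (∑ k, ∑ l, ∑ m, ωi k l x t * pd k (fun z => A z t) x
              * (pd l (fun y => X y m) x * pd m (fun z => B z t) x))
            = ∑ k, ∑ l, ∑ m, ωi k m x t * pd m (fun y => X y l) x
              * pd k (fun z => A z t) x * pd l (fun z => B z t) x := by
          rw [sum_swap23 (fun k l m => ωi k l x t * pd k (fun z => A z t) x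
            * (pd l (fun y => X y m) x * pd m (fun z => B z t) x))]
          exact Finset.sum_congr rfl fun k _ => Finset.sum_congr rfl fun l _ =>
            Finset.sum_congr rfl fun m _ => by ring
        rw [c3, c4]; ring
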